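/- arXiv:2406.13668 — 7 statements merged into one kernel-verified Lean document; each statement's English description precedes it below -/
import Mathlib

section
/- Let t₀, t₁, t₂ be non-negative integers with 1 ≤ t₁ ≤ ⌊t₀/2⌋ and t₂ ≤ ⌈t₀/2⌉, let t = t₀ + t₁ + t₂, and let λ ∈ (1,2), β ∈ (0,1). Then t₁^β + λ·t₂^β ≤ t^β · (1 + 4λ/3)/4^β. -/
/-! Both `t₁` and `t₂` are at most `t/3`, and the smaller of the two is at most `t/4`. Since
`(t/3)^β ≤ (4/3)·(t/4)^β` for `β ≤ 1`, the left side is at most `(t/4)^β` times `1 + 4λ/3` when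
`t₁ ≤ t₂`, and times `4/3 + λ ≤ 1 + 4λ/3` when `t₂ ≤ t₁`. -/

open Real

lemma rpow_div_three_le {T β : ℝ} (hT : 0 ≤ T) (hβ : β ≤ 1) :
    (T / 3) ^ β ≤ 4 / 3 * (T / 4) ^ β := by
  rw [show T / 3 = 4 / 3 * (T / 4) by ring, mul_rpow (by norm_num) (by positivity)]
  gcongr
  exact rpow_le_self_of_one_le (by norm_num) hβ

lemma rpow_add_mul_rpow_le {x y T lam β : ℝ} (hx : 0 ≤ x) (hy : 0 ≤ y)
    (hβ₀ : 0 ≤ β) (hβ₁ : β ≤ 1) (hlam : 1 ≤ lam)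
    (hmin : 4 * min x y ≤ T) (hmax : 3 * max x y ≤ T) :
    x ^ β + lam * y ^ β ≤ (1 + 4 * lam / 3) * (T / 4) ^ β := by
  have hT : 0 ≤ T := by linarith [le_max_left x y]
  have hthird := rpow_div_three_le hT hβ₁
  have hquarter : 0 ≤ (T / 4) ^ β := by positivity
  rcases le_total x y with hxy | hyx
  · have hx4 : x ^ β ≤ (T / 4) ^ β :=
      rpow_le_rpow hx (by rw [min_eq_left hxy] at hmin; linarith) hβ₀
    have hy3 : y ^ β ≤ (T / 3) ^ β :=
      rpow_le_rpow hy (by rw [max_eq_right hxy] at hmax; linarith) hβ₀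
    nlinarith
  · have hx3 : x ^ β ≤ (T / 3) ^ β :=
      rpow_le_rpow hx (by rw [max_eq_left hyx] at hmax; linarith) hβ₀
    have hy4 : y ^ β ≤ (T / 4) ^ β :=
      rpow_le_rpow hy (by rw [min_eq_right hyx] at hmin; linarith) hβ₀
    nlinarith

theorem stmt_5 (t0 t1 t2 t : ℕ) (lam β : ℝ)
    (ht1 : 1 ≤ t1) (ht1' : t1 ≤ t0 / 2) (ht2 : t2 ≤ (t0 + 1) / 2)
    (ht : t = t0 + t1 + t2)
    (hlam : lam ∈ Set.Ioo (1:ℝ) 2) (hβ : β ∈ Set.Ioo (0:ℝ) 1) :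
    (t1 : ℝ) ^ β + lam * (t2 : ℝ) ^ β ≤ (t : ℝ) ^ β * ((1 + 4 * lam / 3) / 4 ^ β) := by
  have hmin : 4 * min t1 t2 ≤ t := by omega
  have hmax : 3 * max t1 t2 ≤ t := by omega
  have hrhs : (t : ℝ) ^ β * ((1 + 4 * lam / 3) / 4 ^ β)
      = (1 + 4 * lam / 3) * ((t : ℝ) / 4) ^ β := by
    rw [div_rpow (by positivity) (by norm_num)]
    ring
  rw [hrhs]
  exact rpow_add_mul_rpow_le (by positivity) (by positivity) hβ.1.le hβ.2.le hlam.1.le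
    (by exact_mod_cast hmin) (by exact_mod_cast hmax)
end

section
/- For β ∈ (0,1) the function q ↦ ((1-q)/3)^β + (2(1-q)/3)^β + q^β is increasing on [0, 1/3]. -/
/-!
The derivative is `β (q^(β-1) - ⅓ ((1-q)/3)^(β-1) - ⅔ (2(1-q)/3)^(β-1))`. Since `q ≤ 1/3` we have
`1 - q ≥ 2q`, and as `x ↦ x^(β-1)` is decreasing the two subtracted terms are at most
`(⅓ (3/2)^(1-β) + ⅔ (3/4)^(1-β)) q^(β-1)`. By concavity of `x ↦ x^(1-β)` the bracket is at most
`(⅓ · 3/2 + ⅔ · 3/4)^(1-β) = 1`.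
-/

open Real Set

lemma one_third_mul_rpow_add_two_thirds_mul_rpow_le_one {t : ℝ} (ht₀ : 0 ≤ t) (ht₁ : t ≤ 1) :
    1 / 3 * (3 / 2 : ℝ) ^ t + 2 / 3 * (3 / 4 : ℝ) ^ t ≤ 1 := by
  have h := (Real.concaveOn_rpow ht₀ ht₁).2 (mem_Ici.2 (by norm_num : (0 : ℝ) ≤ 3 / 2))
    (mem_Ici.2 (by norm_num : (0 : ℝ) ≤ 3 / 4)) (by norm_num : (0 : ℝ) ≤ 1 / 3)
    (by norm_num : (0 : ℝ) ≤ 2 / 3) (by norm_num)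
  norm_num at h
  exact h

lemma mul_rpow_sub_one {c x : ℝ} (β : ℝ) (hc : 0 < c) (hx : 0 ≤ x) :
    (c * x) ^ (β - 1) = c⁻¹ ^ (1 - β) * x ^ (β - 1) := by
  rw [mul_rpow hc.le hx, inv_rpow hc.le, ← rpow_neg hc.le, neg_sub]

lemma weighted_rpow_sub_one_lt {β q : ℝ} (hβ₀ : 0 < β) (hβ₁ : β < 1) (hq₀ : 0 < q)
    (hq : q < 1 / 3) :
    1 / 3 * ((1 - q) / 3) ^ (β - 1) + 2 / 3 * (2 * (1 - q) / 3) ^ (β - 1) < q ^ (β - 1) := by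
  have h₁ : ((1 - q) / 3) ^ (β - 1) < (3 / 2) ^ (1 - β) * q ^ (β - 1) :=
    calc ((1 - q) / 3) ^ (β - 1) < (2 / 3 * q) ^ (β - 1) :=
          rpow_lt_rpow_of_neg (by positivity) (by linarith) (by linarith)
      _ = _ := by rw [mul_rpow_sub_one β (by norm_num) hq₀.le]; norm_num
  have h₂ : (2 * (1 - q) / 3) ^ (β - 1) < (3 / 4) ^ (1 - β) * q ^ (β - 1) :=
    calc (2 * (1 - q) / 3) ^ (β - 1) < (4 / 3 * q) ^ (β - 1) :=
          rpow_lt_rpow_of_neg (by positivity) (by linarith) (by linarith)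
      _ = _ := by rw [mul_rpow_sub_one β (by norm_num) hq₀.le]; norm_num
  have hsum := one_third_mul_rpow_add_two_thirds_mul_rpow_le_one (t := 1 - β) (by linarith)
    (by linarith)
  calc 1 / 3 * ((1 - q) / 3) ^ (β - 1) + 2 / 3 * (2 * (1 - q) / 3) ^ (β - 1)
      < (1 / 3 * (3 / 2) ^ (1 - β) + 2 / 3 * (3 / 4) ^ (1 - β)) * q ^ (β - 1) := by
        linarith
    _ ≤ q ^ (β - 1) :=
        mul_le_of_le_one_left (rpow_pos_of_pos hq₀ _).le hsum

lemma hasDerivAt_rpow_thirds_add {β q : ℝ} (hq₀ : 0 < q) (hq₁ : q < 1) :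
    HasDerivAt (fun q : ℝ => ((1 - q) / 3) ^ β + (2 * (1 - q) / 3) ^ β + q ^ β)
      (β * (q ^ (β - 1) - (1 / 3 * ((1 - q) / 3) ^ (β - 1)
        + 2 / 3 * (2 * (1 - q) / 3) ^ (β - 1)))) q := by
  have h₁ := (((hasDerivAt_id' q).const_sub 1).div_const 3).rpow_const (p := β)
    (Or.inl (by linarith))
  have h₂ := ((((hasDerivAt_id' q).const_sub 1).const_mul 2).div_const 3).rpow_const (p := β)
    (Or.inl (by linarith))
  have h₃ := (hasDerivAt_id' q).rpow_const (p := β) (Or.inl hq₀.ne')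
  exact ((h₁.add h₂).add h₃).congr_deriv (by ring)

theorem stmt_7 (β : ℝ) (hβ : β ∈ Set.Ioo (0:ℝ) 1) :
    StrictMonoOn (fun q : ℝ => ((1 - q) / 3) ^ β + (2 * (1 - q) / 3) ^ β + q ^ β)
      (Set.Icc (0:ℝ) (1/3)) := by
  obtain ⟨hβ₀, hβ₁⟩ := hβ
  refine strictMonoOn_of_deriv_pos (convex_Icc _ _) ?_ fun q hq => ?_
  · fun_prop (disch := exact hβ₀.le)
  rw [interior_Icc] at hq
  obtain ⟨hq₀, hq⟩ := hq
  rw [(hasDerivAt_rpow_thirds_add hq₀ (by linarith)).deriv]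
  exact mul_pos hβ₀ (sub_pos.2 (weighted_rpow_sub_one_lt hβ₀ hβ₁ hq₀ hq))
end

section
/- Fix Δ ∈ (0,1/4], ε ∈ (0,1), a ≥ ε, m ∈ [0, 1/Δ²], and define h and R as follows: h(x) = Δx²/2 for |x| ≤ 1/Δ, h(x) = |x| - 1/(2Δ) otherwise; R(x) = max{(a - ε/3)x, εx/3} + (ε/12)h(x) + (ε/12)mΔ²|x|. Let x be a real number and Y a real random variable with E[Y] ≥ x. Then E[R(Y)] - R(x) ≥ ε·(E[Y] - x)/6. -/
/-!
Each summand of `R` is convex and has an explicit subgradient at `x`, so `R` has a supporting line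
`y ↦ R x + c * (y - x)` at `x` whose slope is at least `ε/3 - ε/12 - (ε/12) m Δ² ≥ ε/6`.
Integrating this line against the law of `Y` gives `E[R(Y)] ≥ R x + c (E[Y] - x)`, which does the
work of Jensen's inequality and of the strong monotonicity of `R` at once.
-/

open MeasureTheory

def IsSubgradientAt (f : ℝ → ℝ) (x c : ℝ) : Prop :=
  ∀ y, f x + c * (y - x) ≤ f y

namespace IsSubgradientAt

variable {f g : ℝ → ℝ} {x c d : ℝ}

lemma of_le_of_eq {b : ℝ} (hle : ∀ y, c * y - b ≤ f y) (heq : f x = c * x - b) :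
    IsSubgradientAt f x c := fun y => by
  rw [heq]; linarith [hle y]

lemma add (hf : IsSubgradientAt f x c) (hg : IsSubgradientAt g x d) :
    IsSubgradientAt (fun y => f y + g y) x (c + d) := fun y => by
  linarith [hf y, hg y]

lemma const_mul (hf : IsSubgradientAt f x c) {k : ℝ} (hk : 0 ≤ k) :
    IsSubgradientAt (fun y => k * f y) x (k * c) := fun y => by
  nlinarith [mul_le_mul_of_nonneg_left (hf y) hk]

lemma max (hf : IsSubgradientAt f x c) (hg : IsSubgradientAt g x d) :
    IsSubgradientAt (fun y => max (f y) (g y)) x (if g x ≤ f x then c else d) := fun y => by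
  show Max.max (f x) (g x) + _ ≤ Max.max (f y) (g y)
  split_ifs with hgf
  · rw [max_eq_left hgf]; exact (hf y).trans (le_max_left _ _)
  · rw [max_eq_right (not_le.1 hgf).le]; exact (hg y).trans (le_max_right _ _)

variable {Ω : Type*} [MeasurableSpace Ω] {P : Measure Ω} [IsProbabilityMeasure P] {Y : Ω → ℝ}

lemma le_integral_comp (hf : IsSubgradientAt f x c) (hY : Integrable Y P)
    (hfY : Integrable (fun ω => f (Y ω)) P) :
    f x + c * ((∫ ω, Y ω ∂P) - x) ≤ ∫ ω, f (Y ω) ∂P := by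
  have haff : Integrable (fun ω => f x + c * (Y ω - x)) P := by fun_prop
  calc f x + c * ((∫ ω, Y ω ∂P) - x) = ∫ ω, f x + c * (Y ω - x) ∂P := by
        rw [integral_add (integrable_const _) (by fun_prop), integral_const_mul,
          integral_sub hY (integrable_const x)]
        simp
    _ ≤ ∫ ω, f (Y ω) ∂P := integral_mono haff hfY fun ω => hf (Y ω)

end IsSubgradientAt

lemma isSubgradientAt_mul_left (s x : ℝ) : IsSubgradientAt (fun y => s * y) x s :=
  fun y => le_of_eq (by ring)

lemma mul_le_abs_of_abs_le_one {u : ℝ} (hu : |u| ≤ 1) (y : ℝ) : u * y ≤ |y| :=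
  calc u * y ≤ |u| * |y| := by rw [← abs_mul]; exact le_abs_self _
    _ ≤ |y| := mul_le_of_le_one_left (abs_nonneg y) hu

lemma abs_sign_le_one (x : ℝ) : |(SignType.sign x : ℝ)| ≤ 1 := by
  rcases SignType.sign x with _ | _ | _ <;> simp

lemma isSubgradientAt_abs (x : ℝ) : IsSubgradientAt (fun y => |y|) x (SignType.sign x) :=
  .of_le_of_eq (b := 0) (fun y => by simpa using mul_le_abs_of_abs_le_one (abs_sign_le_one x) y)
    (by simp [sign_mul_self])

noncomputable def huber (Δ x : ℝ) : ℝ := if |x| ≤ 1 / Δ then Δ * x ^ 2 / 2 else |x| - 1 / (2 * Δ)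

noncomputable def huberSlope (Δ x : ℝ) : ℝ := max (-1) (min 1 (Δ * x))

section Huber

variable {Δ : ℝ}

lemma abs_huberSlope_le_one (Δ x : ℝ) : |huberSlope Δ x| ≤ 1 :=
  abs_le.2 ⟨le_max_left _ _, max_le (by norm_num) (min_le_left _ _)⟩

/-- `huber Δ y` is the supremum of `u * y - u ^ 2 / (2 * Δ)` over `|u| ≤ 1`, attained at
`u = huberSlope Δ y`. -/
lemma mul_sub_le_huber (hΔ : 0 < Δ) {u : ℝ} (hu : |u| ≤ 1) (y : ℝ) :
    u * y - u ^ 2 / (2 * Δ) ≤ huber Δ y := by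
  unfold huber
  split_ifs with hy
  · have : 0 ≤ (Δ * y - u) ^ 2 / (2 * Δ) := by positivity
    have : (Δ * y - u) ^ 2 / (2 * Δ) = Δ * y ^ 2 / 2 - (u * y - u ^ 2 / (2 * Δ)) := by
      field_simp; ring
    linarith
  · have hΔy : 1 < Δ * |y| := by rwa [not_le, div_lt_iff₀' hΔ] at hy
    have huy : u * y ≤ |u| * |y| := by rw [← abs_mul]; exact le_abs_self _
    have key : 2 * Δ * (u * y) - u ^ 2 ≤ 2 * Δ * |y| - 1 := by
      nlinarith [mul_le_mul_of_nonneg_left huy hΔ.le, sq_abs u,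
        mul_nonneg (by linarith : 0 ≤ 1 - |u|) (by linarith : 0 ≤ 2 * Δ * |y| - 1 - |u|)]
    have h2Δ : 0 < 2 * Δ := by positivity
    rw [sub_le_sub_iff, ← sub_nonneg]
    have : |y| + u ^ 2 / (2 * Δ) - (u * y + 1 / (2 * Δ))
        = (2 * Δ * |y| - 1 - (2 * Δ * (u * y) - u ^ 2)) / (2 * Δ) := by
      field_simp; ring
    rw [this]
    exact div_nonneg (by linarith) h2Δ.le

lemma huber_eq_huberSlope (hΔ : 0 < Δ) (x : ℝ) :
    huber Δ x = huberSlope Δ x * x - huberSlope Δ x ^ 2 / (2 * Δ) := by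
  unfold huber huberSlope
  split_ifs with hx
  · have : |Δ * x| ≤ 1 := by
      rw [abs_mul, abs_of_pos hΔ]; exact (le_div_iff₀' hΔ).1 hx
    rw [min_eq_right (abs_le.1 this).2, max_eq_right (abs_le.1 this).1]
    field_simp; ring
  · rw [not_le, div_lt_iff₀' hΔ] at hx
    rcases le_or_gt 0 x with h0 | h0
    · rw [abs_of_nonneg h0] at hx ⊢
      rw [min_eq_left hx.le, max_eq_right (by norm_num)]
      ring
    · rw [abs_of_neg h0] at hx ⊢
      rw [min_eq_right (by linarith), max_eq_left (by linarith)]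
      ring

lemma isSubgradientAt_huber (hΔ : 0 < Δ) (x : ℝ) :
    IsSubgradientAt (huber Δ) x (huberSlope Δ x) :=
  .of_le_of_eq (mul_sub_le_huber hΔ (abs_huberSlope_le_one Δ x)) (huber_eq_huberSlope hΔ x)

lemma continuous_huber (hΔ : 0 < Δ) : Continuous (huber Δ) := by
  rw [show huber Δ = _ from funext (huber_eq_huberSlope hΔ)]
  unfold huberSlope
  fun_prop

lemma abs_huber_le (hΔ : 0 < Δ) (y : ℝ) : |huber Δ y| ≤ |y| := by
  have h0 : 0 ≤ huber Δ y := by simpa using mul_sub_le_huber hΔ (u := 0) (by simp) y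
  rw [abs_of_nonneg h0, huber_eq_huberSlope hΔ]
  have := mul_le_abs_of_abs_le_one (abs_huberSlope_le_one Δ y) y
  have : 0 ≤ huberSlope Δ y ^ 2 / (2 * Δ) := by positivity
  linarith

lemma MeasureTheory.Integrable.huber_comp {Ω : Type*} [MeasurableSpace Ω] {P : Measure Ω}
    {Y : Ω → ℝ} (hΔ : 0 < Δ) (hY : Integrable Y P) : Integrable (fun ω => huber Δ (Y ω)) P :=
  hY.abs.mono' ((continuous_huber hΔ).comp_aestronglyMeasurable hY.aestronglyMeasurable)
    (ae_of_all _ fun ω => abs_huber_le hΔ (Y ω))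

end Huber

theorem stmt_10 (Δ ε a m : ℝ) (hΔ : Δ ∈ Set.Ioc (0:ℝ) (1/4)) (hε : ε ∈ Set.Ioo (0:ℝ) 1)
    (ha : ε ≤ a) (hm : m ∈ Set.Icc (0:ℝ) (1 / Δ ^ 2))
    (h : ℝ → ℝ)
    (hh : ∀ x, h x = if |x| ≤ 1 / Δ then Δ * x ^ 2 / 2 else |x| - 1 / (2 * Δ))
    (R : ℝ → ℝ)
    (hR : ∀ x, R x = max ((a - ε / 3) * x) (ε * x / 3) + ε / 12 * h x + ε / 12 * m * Δ ^ 2 * |x|)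
    (Ω : Type) [MeasurableSpace Ω] (P : Measure Ω) [IsProbabilityMeasure P]
    (Y : Ω → ℝ) (hY : Integrable Y P)
    (x : ℝ) (hx : x ≤ ∫ ω, Y ω ∂P) :
    ε * ((∫ ω, Y ω ∂P) - x) / 6 ≤ (∫ ω, R (Y ω) ∂P) - R x := by
  obtain ⟨hΔ, -⟩ := hΔ
  obtain ⟨hε, -⟩ := hε
  obtain ⟨hm, hm₁⟩ := hm
  have hmΔ : m * Δ ^ 2 ≤ 1 := by rwa [le_div_iff₀ (by positivity)] at hm₁
  have hk : 0 ≤ ε / 12 * m * Δ ^ 2 := by positivity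
  obtain rfl : h = huber Δ := funext hh
  obtain rfl : R = _ := funext hR
  obtain ⟨c, hc, hmax⟩ : ∃ c, ε / 3 ≤ c ∧
      IsSubgradientAt (fun y => max ((a - ε / 3) * y) (ε * y / 3)) x c := by
    have hlin : IsSubgradientAt (fun y => ε * y / 3) x (ε / 3) := by
      simpa only [div_mul_eq_mul_div] using isSubgradientAt_mul_left (ε / 3) x
    exact ⟨_, by split_ifs <;> linarith, (isSubgradientAt_mul_left _ x).max hlin⟩
  have hR_sub :=
    (hmax.add ((isSubgradientAt_huber hΔ x).const_mul (by positivity : 0 ≤ ε / 12))).add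
      ((isSubgradientAt_abs x).const_mul hk)
  have hslope : ε / 6 ≤ c + ε / 12 * huberSlope Δ x + ε / 12 * m * Δ ^ 2 * SignType.sign x := by
    have h₁ := (abs_le.1 (abs_huberSlope_le_one Δ x)).1
    have h₂ := (abs_le.1 (abs_sign_le_one x)).1
    nlinarith [mul_le_mul_of_nonneg_left h₁ (by positivity : 0 ≤ ε / 12),
      mul_le_mul_of_nonneg_left h₂ hk]
  have hRY : Integrable (fun ω => max ((a - ε / 3) * Y ω) (ε * Y ω / 3) + ε / 12 * huber Δ (Y ω)
      + ε / 12 * m * Δ ^ 2 * |Y ω|) P :=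
    (((hY.const_mul _).sup ((hY.const_mul ε).div_const 3)).add
      ((hY.huber_comp hΔ).const_mul _)).add (hY.abs.const_mul _)
  calc ε * ((∫ ω, Y ω ∂P) - x) / 6 = ε / 6 * ((∫ ω, Y ω ∂P) - x) := by ring
    _ ≤ (c + ε / 12 * huberSlope Δ x + ε / 12 * m * Δ ^ 2 * SignType.sign x) *
          ((∫ ω, Y ω ∂P) - x) :=
      mul_le_mul_of_nonneg_right hslope (sub_nonneg.2 hx)
    _ ≤ _ := by linarith [hR_sub.le_integral_comp hY hRY]
end

section
/- For the sign-preservation-with-reuse game value opt(n,s) (the optimal expected number of signs preserved with n cells and s rounds), opt(n, 2s) ≤ 2·opt(n, s) for all n, s ∈ ℕ. -/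
/-- Value of the Sign-Preservation-with-Reuse (SPR) game from position `st` with a given
number of rounds remaining. `st i = some true` means a plus sign in cell `i`,
`some false` a minus sign, `none` an empty cell. In each round Player-P (the maximizer)
may terminate the game, or point at an empty cell `j`; Player-L (the minimizer) may then
remove any minus signs to the left of `j` and any plus signs to the right of `j`, and
places a sign in cell `j`. The payoff is the number of signs remaining at the end. -/
def sprVal (n : ℕ) : ℕ → (Fin n → Option Bool) → ℕ
  | 0, st => (Finset.univ.filter fun i => (st i).isSome).card
  | s + 1, st =>
      max ((Finset.univ.filter fun i => (st i).isSome).card)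
        ((Finset.univ.filter fun j => st j = none).sup fun j =>
          Finset.univ.inf' Finset.univ_nonempty fun b : Bool =>
            ((Finset.univ.filter fun i =>
                (i < j ∧ st i = some false) ∨ (j < i ∧ st i = some true)).powerset).inf'
              (Finset.powerset_nonempty _) fun R =>
                sprVal n s fun i => if i = j then some b else if i ∈ R then none else st i)

def opt (n s : ℕ) : ℕ := sprVal n s fun _ => none

/-!
The claim follows from subadditivity in the number of rounds, `opt n (t + s) ≤ opt n t + opt n s`.
In a game of `t + s` rounds Player-L plays the first `t` rounds optimally. In the remaining
rounds he ignores the signs `u` already on the board: he answers every move as in an optimal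
play of the `s`-round game from the empty board and never removes a sign of `u`, so the board
stays `u` overlaid on that play. The signs of `u` number at most `opt n t` and the others at
most `opt n s`.
-/
lemma Finset.le_inf'_add {ι M : Type*} [Add M] [LinearOrder M]
    {s : Finset ι} (hs : s.Nonempty) {a c : M} {g : ι → M} (h : ∀ i ∈ s, a ≤ g i + c) :
    a ≤ s.inf' hs g + c := by
  obtain ⟨i, hi, hg⟩ := s.exists_mem_eq_inf' hs g
  rw [hg]
  exact h i hi

namespace SPR

open Finset

variable {n : ℕ}

def signCount (st : Fin n → Option Bool) : ℕ := #{i | (st i).isSome}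

def removable (st : Fin n → Option Bool) (j : Fin n) : Finset (Fin n) :=
  {i | (i < j ∧ st i = some false) ∨ (j < i ∧ st i = some true)}

def afterMove (st : Fin n → Option Bool) (j : Fin n) (b : Bool) (R : Finset (Fin n)) :
    Fin n → Option Bool :=
  fun i => if i = j then some b else if i ∈ R then none else st i

lemma sprVal_zero (st : Fin n → Option Bool) : sprVal n 0 st = signCount st := rfl

lemma sprVal_succ (s : ℕ) (st : Fin n → Option Bool) :
    sprVal n (s + 1) st = max (signCount st)
      (Finset.sup {j | st j = none} fun j => univ.inf' univ_nonempty fun b =>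
        (removable st j).powerset.inf' (powerset_nonempty _) fun R =>
          sprVal n s (afterMove st j b R)) := rfl

def overlay (u v : Fin n → Option Bool) : Fin n → Option Bool := fun i => (u i).or (v i)

lemma overlay_empty (u : Fin n → Option Bool) : overlay u (fun _ => none) = u :=
  funext fun _ => Option.or_none

lemma signCount_overlay_le (u v : Fin n → Option Bool) :
    signCount (overlay u v) ≤ signCount v + signCount u := by
  refine (card_le_card fun i hi => ?_).trans (card_union_le _ _)
  simp only [overlay, mem_filter, mem_univ, true_and, Option.isSome_or, Bool.or_eq_true,
    mem_union] at hi ⊢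
  exact hi.symm

lemma removable_overlay {u v : Fin n → Option Bool} {j : Fin n} {R : Finset (Fin n)}
    (hR : R ⊆ removable v j) : {i ∈ R | u i = none} ⊆ removable (overlay u v) j := by
  intro i hi
  obtain ⟨hiR, hui⟩ := mem_filter.1 hi
  simpa [removable, overlay, hui] using hR hiR

/-- Player-L answers a move on the overlay as he would on `v`, sparing the signs of `u`. -/
lemma afterMove_overlay {u v : Fin n → Option Bool} {j : Fin n} (huj : u j = none) (b : Bool)
    (R : Finset (Fin n)) :
    afterMove (overlay u v) j b {i ∈ R | u i = none} = overlay u (afterMove v j b R) := by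
  funext i
  by_cases hij : i = j
  · subst hij
    simp [afterMove, overlay, huj]
  · cases hui : u i <;> by_cases hiR : i ∈ R <;>
      simp [afterMove, overlay, hij, hiR, hui]

lemma sprVal_overlay_le (s : ℕ) (u v : Fin n → Option Bool) :
    sprVal n s (overlay u v) ≤ sprVal n s v + signCount u := by
  induction s generalizing v with
  | zero => exact signCount_overlay_le u v
  | succ s ih =>
    rw [sprVal_succ, sprVal_succ, ← max_add_add_right]
    refine max_le_max (signCount_overlay_le u v) (Finset.sup_le fun j hj => ?_)
    obtain ⟨huj, hvj⟩ := Option.or_eq_none_iff.1 (mem_filter.1 hj).2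
    refine (add_le_add_left (le_sup (mem_filter.2 ⟨mem_univ j, hvj⟩)) _).trans' ?_
    refine le_inf'_add _ fun b _ => (inf'_le _ (mem_univ b)).trans ?_
    refine le_inf'_add _ fun R hR => ?_
    calc _ ≤ sprVal n s (afterMove (overlay u v) j b {i ∈ R | u i = none}) :=
          inf'_le _ (mem_powerset.2 (removable_overlay (mem_powerset.1 hR)))
      _ = sprVal n s (overlay u (afterMove v j b R)) := by rw [afterMove_overlay huj]
      _ ≤ _ := ih _

lemma sprVal_le_opt_add_signCount (s : ℕ) (st : Fin n → Option Bool) :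
    sprVal n s st ≤ opt n s + signCount st := by
  have h := sprVal_overlay_le s st fun _ => none
  rwa [overlay_empty] at h

lemma sprVal_add_le (t s : ℕ) (st : Fin n → Option Bool) :
    sprVal n (t + s) st ≤ sprVal n t st + opt n s := by
  induction t generalizing st with
  | zero => simpa [add_comm, sprVal_zero] using sprVal_le_opt_add_signCount s st
  | succ t ih =>
    rw [Nat.add_right_comm, sprVal_succ, sprVal_succ, ← max_add_add_right]
    refine max_le_max le_self_add (Finset.sup_le fun j hj => ?_)
    refine (add_le_add_left (le_sup hj) _).trans' ?_
    refine le_inf'_add _ fun b _ => (inf'_le _ (mem_univ b)).trans ?_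
    exact le_inf'_add _ fun R hR => (inf'_le _ hR).trans (ih _)

lemma opt_add_le (t s : ℕ) : opt n (t + s) ≤ opt n t + opt n s :=
  sprVal_add_le t s _

end SPR

theorem stmt_12 (n s : ℕ) : opt n (2 * s) ≤ 2 * opt n s := by
  rw [two_mul, two_mul]
  exact SPR.opt_add_le s s
end

section
/- For any d, k ∈ ℕ with d ≥ k, there exists an oblivious strategy for Player-P in the sign-preservation game with n = C(d,k)·2^(d-k) cells and s = C(d,k) rounds whose worst-case preservation probability is at least 2^(-k). In particular opt(n, s) ≥ s·2^(-k). -/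
open scoped ENNReal

def blockWidth (d k : ℕ) : ℕ := Nat.choose d k * 2 ^ (d - k)

theorem blockWidth_succ_succ (d k : ℕ) :
    blockWidth (d + 1) (k + 1) = blockWidth d (k + 1) + blockWidth d k + blockWidth d (k + 1) := by
  simp only [blockWidth, Nat.choose_succ_succ, Nat.succ_sub_succ]
  rcases lt_trichotomy k d with h | rfl | h
  · obtain ⟨e, rfl⟩ := Nat.exists_eq_add_of_lt h
    rw [show k + e + 1 - k = e + 1 by omega, show k + e + 1 - (k + 1) = e by omega, pow_succ]
    ring
  · simp [Nat.choose_succ_self]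
  · simp [Nat.choose_eq_zero_of_lt h, Nat.choose_eq_zero_of_lt (h.trans (Nat.lt_succ_self k))]

theorem ENNReal.inv_mul_div_le_div {a b c m : ℕ} (h : a ≤ m * b) :
    (m : ℝ≥0∞)⁻¹ * (a / c) ≤ b / c := by
  rcases Nat.eq_zero_or_pos m with rfl | hm
  · simp [Nat.le_zero.mp (by simpa using h)]
  rw [← mul_div_assoc]
  refine ENNReal.div_le_div_right ((ENNReal.inv_mul_le_iff (by positivity) (by simp)).mpr ?_) _
  exact_mod_cast h

/-- A seed `ω`, drawn uniformly at random, determines the cell `cell ω r` of every round `r`. -/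
structure ObliviousStrategy where
  Ω : Type
  [fintype : Fintype Ω]
  [nonempty : Nonempty Ω]
  rounds : ℕ
  width : ℕ
  cell : Ω → ℕ → ℕ
  cell_lt : ∀ ω r, r < rounds → cell ω r < width
  injOn_cell : ∀ ω, Set.InjOn (cell ω) (Set.Iio rounds)

namespace ObliviousStrategy

attribute [instance] fintype nonempty

def beyond (up : Bool) (x y : ℕ) : Prop := if up then x < y else y < x

theorem beyond_add_left_iff (up : Bool) (c x y : ℕ) :
    beyond up (c + x) (c + y) ↔ beyond up x y := by
  cases up <;> simp [beyond]

section Cells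

variable {Ω : Type*} (c : Ω → ℕ → ℕ)

def history (ω₀ : Ω) (i : ℕ) : Set Ω := {ω | ∀ j ≤ i, c ω j = c ω₀ j}

def FutureBeyond (s : ℕ) (up : Bool) (i : ℕ) (ω : Ω) : Prop :=
  ∀ j, i < j → j < s → beyond up (c ω i) (c ω j)

end Cells

/-- The counting form, for a uniformly random seed, of: conditioned on the history up to any
round `i`, all later cells lie beyond cell `i` on a given side with probability at least `1/m`. -/
def IsPreserving (S : ObliviousStrategy) (m : ℕ) : Prop :=
  ∀ (up : Bool) (ω₀ : S.Ω) (i : ℕ), i < S.rounds →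
    (history S.cell ω₀ i).ncard ≤
      m * {ω ∈ history S.cell ω₀ i | FutureBeyond S.cell S.rounds up i ω}.ncard

def single (w : ℕ) (hw : 0 < w) : ObliviousStrategy where
  Ω := Unit
  rounds := 1
  width := w
  cell _ _ := 0
  cell_lt _ _ _ := hw
  injOn_cell _ := (Set.subsingleton_of_forall_eq 0 fun _ h => Nat.lt_one_iff.mp h).injOn _

theorem isPreserving_single (w : ℕ) (hw : 0 < w) : (single w hw).IsPreserving 1 := by
  intro up ω₀ i hi
  rw [one_mul]
  refine Set.ncard_le_ncard fun ω hω => ⟨hω, fun j hij hj => ?_⟩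
  exact absurd hj (by simp only [single]; omega)

def idle : ObliviousStrategy where
  Ω := Unit
  rounds := 0
  width := 0
  cell _ _ := 0
  cell_lt _ _ h := absurd h (Nat.not_lt_zero _)
  injOn_cell _ _ h := absurd h (Nat.not_lt_zero _)

theorem isPreserving_idle (m : ℕ) : idle.IsPreserving m :=
  fun _ _ _ h => absurd h (Nat.not_lt_zero _)

section Sandwich

variable (A B : ObliviousStrategy)

/-- The rounds of `A` are played in the middle block `[B.width, B.width + A.width)`, then the
coin `x.1` chooses the block above or below it for the rounds of `B`. -/
def sandwichCell (x : Bool × A.Ω × B.Ω) (r : ℕ) : ℕ :=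
  if r < A.rounds then B.width + A.cell x.2.1 r
  else (if x.1 then B.width + A.width else 0) + B.cell x.2.2 (r - A.rounds)

variable {A B}

theorem sandwichCell_of_lt (x : Bool × A.Ω × B.Ω) {r : ℕ} (hr : r < A.rounds) :
    sandwichCell A B x r = B.width + A.cell x.2.1 r :=
  if_pos hr

theorem sandwichCell_of_le (x : Bool × A.Ω × B.Ω) {r : ℕ} (hr : A.rounds ≤ r) :
    sandwichCell A B x r = (if x.1 then B.width + A.width else 0) + B.cell x.2.2 (r - A.rounds) :=
  if_neg hr.not_gt

theorem sandwichCell_lt (x : Bool × A.Ω × B.Ω) {r : ℕ} (hr : r < A.rounds + B.rounds) :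
    sandwichCell A B x r < B.width + A.width + B.width := by
  rcases lt_or_ge r A.rounds with h | h
  · have := A.cell_lt x.2.1 r h
    rw [sandwichCell_of_lt x h]
    omega
  · have := B.cell_lt x.2.2 (r - A.rounds) (by omega)
    rw [sandwichCell_of_le x h]
    split_ifs <;> omega

theorem sandwichCell_injOn (x : Bool × A.Ω × B.Ω) :
    Set.InjOn (sandwichCell A B x) (Set.Iio (A.rounds + B.rounds)) := by
  intro r hr r' hr' h
  simp only [Set.mem_Iio] at hr hr'
  rcases lt_or_ge r A.rounds with h₁ | h₁ <;> rcases lt_or_ge r' A.rounds with h₂ | h₂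
  · rw [sandwichCell_of_lt x h₁, sandwichCell_of_lt x h₂, Nat.add_left_cancel_iff] at h
    exact A.injOn_cell x.2.1 h₁ h₂ h
  · have := A.cell_lt x.2.1 r h₁
    have := B.cell_lt x.2.2 (r' - A.rounds) (by omega)
    rw [sandwichCell_of_lt x h₁, sandwichCell_of_le x h₂] at h
    split_ifs at h <;> omega
  · have := A.cell_lt x.2.1 r' h₂
    have := B.cell_lt x.2.2 (r - A.rounds) (by omega)
    rw [sandwichCell_of_le x h₁, sandwichCell_of_lt x h₂] at h
    split_ifs at h <;> omega
  · rw [sandwichCell_of_le x h₁, sandwichCell_of_le x h₂, Nat.add_left_cancel_iff] at h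
    have := B.injOn_cell x.2.2 (by simp only [Set.mem_Iio]; omega)
      (by simp only [Set.mem_Iio]; omega) h
    omega

theorem coin_eq_of_sandwichCell_eq {x x₀ : Bool × A.Ω × B.Ω} (hB : 0 < B.rounds)
    (h : sandwichCell A B x A.rounds = sandwichCell A B x₀ A.rounds) : x.1 = x₀.1 := by
  obtain ⟨e, a, b⟩ := x
  obtain ⟨e₀, a₀, b₀⟩ := x₀
  have := B.cell_lt b 0 hB
  have := B.cell_lt b₀ 0 hB
  rw [sandwichCell_of_le _ le_rfl, sandwichCell_of_le _ le_rfl, Nat.sub_self] at h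
  cases e <;> cases e₀ <;> simp only [Bool.false_eq_true, ↓reduceIte] at h ⊢ <;> omega

variable (A B)

def sandwich : ObliviousStrategy where
  Ω := Bool × A.Ω × B.Ω
  rounds := A.rounds + B.rounds
  width := B.width + A.width + B.width
  cell := sandwichCell A B
  cell_lt x _ := sandwichCell_lt x
  injOn_cell := sandwichCell_injOn

variable {A B} {m : ℕ}

theorem sandwich_preserving_of_lt (hA : A.IsPreserving m) (up : Bool) (x₀ : Bool × A.Ω × B.Ω)
    {i : ℕ} (hi : i < A.rounds) :
    (history (sandwichCell A B) x₀ i).ncard ≤ 2 * m *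
      {x ∈ history (sandwichCell A B) x₀ i |
        FutureBeyond (sandwichCell A B) (A.rounds + B.rounds) up i x}.ncard := by
  set H := history A.cell x₀.2.1 i
  set G := {a ∈ H | FutureBeyond A.cell A.rounds up i a}
  have hH : history (sandwichCell A B) x₀ i ⊆ Set.univ ×ˢ (H ×ˢ Set.univ) := by
    intro x hx
    refine ⟨trivial, fun j hj => ?_, trivial⟩
    have := hx j hj
    rwa [sandwichCell_of_lt x (by omega), sandwichCell_of_lt x₀ (by omega),
      Nat.add_left_cancel_iff] at this
  have hG : {up} ×ˢ (G ×ˢ Set.univ) ⊆ {x ∈ history (sandwichCell A B) x₀ i |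
      FutureBeyond (sandwichCell A B) (A.rounds + B.rounds) up i x} := by
    rintro ⟨e, a, b⟩ ⟨rfl : e = up, ⟨hhist, hfut⟩, -⟩
    refine ⟨fun j hj => ?_, fun j hij hj => ?_⟩
    · rw [sandwichCell_of_lt _ (by omega), sandwichCell_of_lt _ (by omega), hhist j hj]
    rw [sandwichCell_of_lt _ hi]
    rcases lt_or_ge j A.rounds with hjA | hjA
    · rw [sandwichCell_of_lt _ hjA, beyond_add_left_iff]
      exact hfut j hij hjA
    · have := A.cell_lt a i hi
      have := B.cell_lt b (j - A.rounds) (by omega)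
      rw [sandwichCell_of_le _ hjA]
      cases e <;> simp only [beyond, Bool.false_eq_true, ↓reduceIte] <;> omega
  calc _ ≤ (Set.univ ×ˢ (H ×ˢ Set.univ) : Set (Bool × A.Ω × B.Ω)).ncard := Set.ncard_le_ncard hH
    _ = 2 * (H.ncard * Nat.card B.Ω) := by simp [Set.ncard_prod, Set.ncard_univ]
    _ ≤ 2 * (m * G.ncard * Nat.card B.Ω) := by gcongr; exact hA up x₀.2.1 i hi
    _ = 2 * m * ({up} ×ˢ (G ×ˢ Set.univ) : Set (Bool × A.Ω × B.Ω)).ncard := by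
      simp [Set.ncard_prod, Set.ncard_univ, mul_assoc]
    _ ≤ _ := Nat.mul_le_mul_left _ (Set.ncard_le_ncard hG)

theorem sandwich_preserving_of_le (hB : B.IsPreserving (2 * m)) (up : Bool)
    (x₀ : Bool × A.Ω × B.Ω) {i : ℕ} (hAi : A.rounds ≤ i) (hi : i < A.rounds + B.rounds) :
    (history (sandwichCell A B) x₀ i).ncard ≤ 2 * m *
      {x ∈ history (sandwichCell A B) x₀ i |
        FutureBeyond (sandwichCell A B) (A.rounds + B.rounds) up i x}.ncard := by
  set F := {a | ∀ j < A.rounds, A.cell a j = A.cell x₀.2.1 j}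
  set H := history B.cell x₀.2.2 (i - A.rounds)
  set G := {b ∈ H | FutureBeyond B.cell B.rounds up (i - A.rounds) b}
  have hH : history (sandwichCell A B) x₀ i ⊆ {x₀.1} ×ˢ (F ×ˢ H) := by
    intro x hx
    have hcoin := coin_eq_of_sandwichCell_eq (by omega) (hx A.rounds hAi)
    refine ⟨hcoin, fun j hj => ?_, fun j hj => ?_⟩
    · have := hx j (by omega)
      rwa [sandwichCell_of_lt x hj, sandwichCell_of_lt x₀ hj, Nat.add_left_cancel_iff] at this
    · have := hx (A.rounds + j) (by omega)
      rwa [sandwichCell_of_le x (by omega), sandwichCell_of_le x₀ (by omega), hcoin,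
        Nat.add_sub_cancel_left, Nat.add_left_cancel_iff] at this
  have hG : {x₀.1} ×ˢ (F ×ˢ G) ⊆ {x ∈ history (sandwichCell A B) x₀ i |
      FutureBeyond (sandwichCell A B) (A.rounds + B.rounds) up i x} := by
    rintro ⟨e, a, b⟩ ⟨rfl : e = x₀.1, hF, hH, hfut⟩
    refine ⟨fun j hj => ?_, fun j hij hj => ?_⟩
    · rcases lt_or_ge j A.rounds with hjA | hjA
      · rw [sandwichCell_of_lt _ hjA, sandwichCell_of_lt _ hjA, hF j hjA]
      · rw [sandwichCell_of_le _ hjA, sandwichCell_of_le _ hjA, hH (j - A.rounds) (by omega)]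
    · rw [sandwichCell_of_le _ hAi, sandwichCell_of_le _ (by omega), beyond_add_left_iff]
      exact hfut (j - A.rounds) (by omega) (by omega)
  calc _ ≤ ({x₀.1} ×ˢ (F ×ˢ H) : Set (Bool × A.Ω × B.Ω)).ncard := Set.ncard_le_ncard hH
    _ = F.ncard * H.ncard := by simp [Set.ncard_prod]
    _ ≤ F.ncard * (2 * m * G.ncard) := by
      gcongr; exact hB up x₀.2.2 (i - A.rounds) (by omega)
    _ = 2 * m * ({x₀.1} ×ˢ (F ×ˢ G) : Set (Bool × A.Ω × B.Ω)).ncard := by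
      simp only [Set.ncard_prod, Set.ncard_singleton]; ring
    _ ≤ _ := Nat.mul_le_mul_left _ (Set.ncard_le_ncard hG)

theorem isPreserving_sandwich (hA : A.IsPreserving m) (hB : B.IsPreserving (2 * m)) :
    (sandwich A B).IsPreserving (2 * m) := by
  intro up x₀ i hi
  rcases lt_or_ge i A.rounds with hiA | hiA
  · exact sandwich_preserving_of_lt hA up x₀ hiA
  · exact sandwich_preserving_of_le hB up x₀ hiA hi

end Sandwich

def pascal : ℕ → ℕ → ObliviousStrategy
  | d, 0 => single (2 ^ d) (Nat.two_pow_pos d)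
  | 0, _ + 1 => idle
  | d + 1, k + 1 => sandwich (pascal d k) (pascal d (k + 1))

theorem pascal_rounds : ∀ d k, (pascal d k).rounds = d.choose k
  | _, 0 => by simp [pascal, single]
  | 0, _ + 1 => rfl
  | d + 1, k + 1 => by
    rw [Nat.choose_succ_succ', ← pascal_rounds d k, ← pascal_rounds d (k + 1)]
    rfl

theorem pascal_width : ∀ d k, (pascal d k).width = blockWidth d k
  | _, 0 => by simp [pascal, single, blockWidth]
  | 0, _ + 1 => by simp [pascal, idle, blockWidth]
  | d + 1, k + 1 => by
    rw [blockWidth_succ_succ, ← pascal_width d k, ← pascal_width d (k + 1)]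
    rfl

theorem isPreserving_pascal : ∀ d k, (pascal d k).IsPreserving (2 ^ k)
  | d, 0 => by rw [pascal, pow_zero]; exact isPreserving_single _ _
  | 0, _ + 1 => isPreserving_idle _
  | d + 1, k + 1 => by
    rw [pow_succ']
    exact isPreserving_sandwich (isPreserving_pascal d k)
      (by rw [← pow_succ']; exact isPreserving_pascal d (k + 1))

section Distribution

variable (S : ObliviousStrategy)

def toFin (ω : S.Ω) (r : Fin S.rounds) : Fin S.width := ⟨S.cell ω r, S.cell_lt ω r r.2⟩

noncomputable def toPMF : PMF (Fin S.rounds → Fin S.width) :=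
  (PMF.uniformOfFintype S.Ω).map S.toFin

variable {S} {m : ℕ}

theorem injective_of_mem_support_toPMF {σ : Fin S.rounds → Fin S.width}
    (hσ : σ ∈ S.toPMF.support) : Function.Injective σ := by
  obtain ⟨ω, -, rfl⟩ := (PMF.mem_support_map_iff _ _ _).mp hσ
  intro r r' h
  exact Fin.ext (S.injOn_cell ω r.2 r'.2 (congrArg Fin.val h))

theorem toPMF_toMeasure_apply (s : Set (Fin S.rounds → Fin S.width)) :
    S.toPMF.toMeasure s = (S.toFin ⁻¹' s).ncard / Fintype.card S.Ω := by
  classical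
  rw [PMF.toMeasure_apply_eq_toOuterMeasure_apply _ s.toFinite.measurableSet, toPMF,
    PMF.toOuterMeasure_map_apply, PMF.toOuterMeasure_uniformOfFintype_apply,
    Set.fintypeCard_eq_ncard]

theorem toFin_agree_iff {ω ω₀ : S.Ω} {i : Fin S.rounds} {τ : Fin S.rounds → Fin S.width}
    (hω₀ : ∀ j ≤ i, S.toFin ω₀ j = τ j) :
    (∀ j ≤ i, S.toFin ω j = τ j) ↔ ω ∈ history S.cell ω₀ i := by
  refine ⟨fun h j hj => ?_, fun h j hj => (Fin.ext (h j hj)).trans (hω₀ j hj)⟩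
  have hj' : j < S.rounds := by omega
  exact congrArg Fin.val ((h ⟨j, hj'⟩ hj).trans (hω₀ ⟨j, hj'⟩ hj).symm)

theorem ncard_toFin_preimage_le (hS : S.IsPreserving m) (up : Bool) (i : Fin S.rounds)
    (τ : Fin S.rounds → Fin S.width) :
    (S.toFin ⁻¹' {σ | ∀ j ≤ i, σ j = τ j}).ncard ≤
      m * (S.toFin ⁻¹' {σ | (∀ j ≤ i, σ j = τ j) ∧
        ∀ j, i < j → beyond up (σ i : ℕ) (σ j)}).ncard := by
  by_cases hτ : ∃ ω₀, ∀ j ≤ i, S.toFin ω₀ j = τ j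
  · obtain ⟨ω₀, hω₀⟩ := hτ
    convert hS up ω₀ i i.2 using 3
    · ext ω
      exact toFin_agree_iff hω₀
    · ext ω
      exact and_congr (toFin_agree_iff hω₀)
        ⟨fun h j hij hj => h ⟨j, hj⟩ hij, fun h j hij => h j hij j.2⟩
  · have hempty : S.toFin ⁻¹' {σ | ∀ j ≤ i, σ j = τ j} = ∅ :=
      Set.eq_empty_iff_forall_notMem.mpr fun ω hω => hτ ⟨ω, hω⟩
    rw [hempty, Set.ncard_empty]
    exact Nat.zero_le _

theorem exists_pmf (hS : S.IsPreserving m) {s n : ℕ} (hs : S.rounds = s) (hn : S.width = n) :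
    ∃ P : PMF (Fin s → Fin n), (∀ σ ∈ P.support, Function.Injective σ) ∧
      ∀ (i : Fin s) (τ : Fin s → Fin n),
        (m : ℝ≥0∞)⁻¹ * P.toMeasure {σ | ∀ j ≤ i, σ j = τ j}
            ≤ P.toMeasure {σ | (∀ j ≤ i, σ j = τ j) ∧ ∀ j, i < j → σ i < σ j} ∧
        (m : ℝ≥0∞)⁻¹ * P.toMeasure {σ | ∀ j ≤ i, σ j = τ j}
            ≤ P.toMeasure {σ | (∀ j ≤ i, σ j = τ j) ∧ ∀ j, i < j → σ j < σ i} := by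
  subst hs hn
  refine ⟨S.toPMF, fun σ => injective_of_mem_support_toPMF, fun i τ => ⟨?_, ?_⟩⟩
  all_goals rw [toPMF_toMeasure_apply, toPMF_toMeasure_apply]
  · simpa [beyond] using ENNReal.inv_mul_div_le_div (ncard_toFin_preimage_le hS true i τ)
  · simpa [beyond] using ENNReal.inv_mul_div_le_div (ncard_toFin_preimage_le hS false i τ)

end Distribution

end ObliviousStrategy

namespace SignPreservation

variable {n : ℕ}

def removable (st : Fin n → Option Bool) (j : Fin n) : Finset (Fin n) :=
  Finset.univ.filter fun i => (i < j ∧ st i = some false) ∨ (j < i ∧ st i = some true)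

def place (st : Fin n → Option Bool) (j : Fin n) (b : Bool) (R : Finset (Fin n)) :
    Fin n → Option Bool :=
  fun i => if i = j then some b else if i ∈ R then none else st i

def Forces : ℕ → (Fin n → Option Bool) → ((Fin n → Option Bool) → Prop) → Prop
  | 0, st, Q => Q st
  | r + 1, st, Q =>
    ∃ j, st j = none ∧ ∀ b R, R ⊆ removable st j → Forces r (place st j b R) Q

theorem Forces.mono {r : ℕ} {st : Fin n → Option Bool} {Q Q' : (Fin n → Option Bool) → Prop}
    (h : Forces r st Q) (hQ : ∀ st', Q st' → Q' st') : Forces r st Q' := by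
  induction r generalizing st with
  | zero => exact hQ st h
  | succ r ih =>
    obtain ⟨j, hj, h⟩ := h
    exact ⟨j, hj, fun b R hR => ih (h b R hR)⟩

theorem Forces.bind {r₁ r₂ : ℕ} {st : Fin n → Option Bool} {Q Q' : (Fin n → Option Bool) → Prop}
    (h : Forces r₁ st Q) (h' : ∀ st', Q st' → Forces r₂ st' Q') : Forces (r₁ + r₂) st Q' := by
  induction r₁ generalizing st with
  | zero => rw [Nat.zero_add]; exact h' st h
  | succ r ih =>
    obtain ⟨j, hj, h⟩ := h
    rw [Nat.succ_add]
    exact ⟨j, hj, fun b R hR => ih (h b R hR)⟩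

theorem le_sprVal_of_forces {r m : ℕ} {st : Fin n → Option Bool}
    {Q : (Fin n → Option Bool) → Prop} (h : Forces r st Q)
    (hQ : ∀ st', Q st' → m ≤ (Finset.univ.filter fun i => (st' i).isSome).card) :
    m ≤ sprVal n r st := by
  induction r generalizing st with
  | zero => exact hQ st h
  | succ r ih =>
    obtain ⟨j, hj, h⟩ := h
    rw [sprVal]
    refine le_max_of_le_right (le_trans ?_ (Finset.le_sup (b := j) (by simp [hj])))
    exact Finset.le_inf' _ _ fun b _ => Finset.le_inf' _ _ fun R hR =>
      ih (h b R (Finset.mem_powerset.mp hR))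

def Drops (c : Bool) (x y : Option Bool) : Prop := y = x ∨ (x = some c ∧ y = none)

theorem Drops.trans {c : Bool} {x y z : Option Bool} (h : Drops c x y) (h' : Drops c y z) :
    Drops c x z := by
  unfold Drops at *
  rcases h with rfl | ⟨rfl, rfl⟩ <;> rcases h' with rfl | ⟨h', rfl⟩ <;> simp_all

theorem Drops.eq_none {c : Bool} {y : Option Bool} (h : Drops c none y) : y = none := by
  rcases h with h | ⟨h, -⟩ <;> simp_all

theorem Drops.eq_some_not {c : Bool} {y : Option Bool} (h : Drops c (some !c) y) : y = some !c := by
  rcases h with h | ⟨h, -⟩ <;> simp_all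

/-- The only removals Player-L can make outside the block `[a, b)` while Player-P points inside
it: minus signs to its left and plus signs to its right. -/
def Confined (a b : ℕ) (st st' : Fin n → Option Bool) : Prop :=
  (∀ i : Fin n, (i : ℕ) < a → Drops false (st i) (st' i)) ∧
    ∀ i : Fin n, b ≤ (i : ℕ) → Drops true (st i) (st' i)

theorem Confined.refl (a b : ℕ) (st : Fin n → Option Bool) : Confined a b st st :=
  ⟨fun _ _ => Or.inl rfl, fun _ _ => Or.inl rfl⟩

theorem Confined.trans_of_le {a b a₁ b₁ a₂ b₂ : ℕ} {st st' st'' : Fin n → Option Bool}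
    (h₁ : Confined a₁ b₁ st st') (h₂ : Confined a₂ b₂ st' st'') (ha₁ : a ≤ a₁) (ha₂ : a ≤ a₂)
    (hb₁ : b₁ ≤ b) (hb₂ : b₂ ≤ b) : Confined a b st st'' :=
  ⟨fun i hi => (h₁.1 i (by omega)).trans (h₂.1 i (by omega)),
    fun i hi => (h₁.2 i (by omega)).trans (h₂.2 i (by omega))⟩

theorem place_eq_of_notMem {st : Fin n → Option Bool} {j i : Fin n} {c : Bool}
    {R : Finset (Fin n)} (hij : i ≠ j) (hiR : i ∉ R) : place st j c R i = st i := by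
  simp [place, hij, hiR]

theorem place_eq_of_mem {st : Fin n → Option Bool} {j i : Fin n} {c : Bool}
    {R : Finset (Fin n)} (hij : i ≠ j) (hiR : i ∈ R) : place st j c R i = none := by
  simp [place, hij, hiR]

theorem Confined.eq_none {a b : ℕ} {st st' : Fin n → Option Bool} (h : Confined a b st st')
    {i : Fin n} (hi : (i : ℕ) < a ∨ b ≤ i) (hst : st i = none) : st' i = none := by
  rcases hi with hi | hi
  · exact (hst ▸ h.1 i hi).eq_none
  · exact (hst ▸ h.2 i hi).eq_none

theorem confined_place {a b : ℕ} {st : Fin n → Option Bool} {j : Fin n} (haj : a ≤ j)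
    (hjb : (j : ℕ) < b) (c : Bool) {R : Finset (Fin n)} (hR : R ⊆ removable st j) :
    Confined a b st (place st j c R) := by
  refine ⟨fun i hi => ?_, fun i hi => ?_⟩
  all_goals
    have hij : i ≠ j := fun h => by subst h; omega
    by_cases hiR : i ∈ R
    swap
    · exact Or.inl (place_eq_of_notMem hij hiR)
    have hrem := hR hiR
    simp only [removable, Finset.mem_filter, Finset.mem_univ, true_and, Fin.lt_def] at hrem
  · obtain ⟨-, hst⟩ | ⟨hji, -⟩ := hrem
    · exact Or.inr ⟨hst, place_eq_of_mem hij hiR⟩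
    · omega
  · obtain ⟨hij', -⟩ | ⟨-, hst⟩ := hrem
    · omega
    · exact Or.inr ⟨hst, place_eq_of_mem hij hiR⟩

def signCount (st : Fin n → Option Bool) (a b : ℕ) : ℕ :=
  (Finset.univ.filter fun i : Fin n => a ≤ i ∧ (i : ℕ) < b ∧ (st i).isSome).card

def signCountOf (c : Bool) (st : Fin n → Option Bool) (a b : ℕ) : ℕ :=
  (Finset.univ.filter fun i : Fin n => a ≤ i ∧ (i : ℕ) < b ∧ st i = some c).card

theorem signCount_le_signCountOf_add (st : Fin n → Option Bool) (a b : ℕ) :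
    signCount st a b ≤ signCountOf true st a b + signCountOf false st a b := by
  simp only [signCount, signCountOf, Finset.card_filter, ← Finset.sum_add_distrib]
  refine Finset.sum_le_sum fun i _ => ?_
  rcases st i with _ | _ | _ <;> split_ifs <;> simp_all

theorem signCountOf_le_signCount (c : Bool) (st : Fin n → Option Bool) (a b : ℕ) :
    signCountOf c st a b ≤ signCount st a b :=
  Finset.card_le_card (Finset.monotone_filter_right _ fun i _ h => ⟨h.1, h.2.1, by simp [h.2.2]⟩)

theorem signCount_add (st : Fin n → Option Bool) {a b c : ℕ} (hac : a ≤ c) (hcb : c ≤ b) :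
    signCount st a c + signCount st c b = signCount st a b := by
  simp only [signCount, Finset.card_filter, ← Finset.sum_add_distrib]
  refine Finset.sum_congr rfl fun i _ => ?_
  split_ifs <;> simp_all <;> omega

theorem signCount_mono (st : Fin n → Option Bool) {a b a' b' : ℕ} (ha : a ≤ a') (hb : b' ≤ b) :
    signCount st a' b' ≤ signCount st a b :=
  Finset.card_le_card (Finset.monotone_filter_right _ fun _ _ h =>
    ⟨ha.trans h.1, h.2.1.trans_le hb, h.2.2⟩)

theorem signCountOf_mono {c : Bool} {st st' : Fin n → Option Bool} {a b : ℕ}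
    (h : ∀ i : Fin n, a ≤ i → (i : ℕ) < b → st i = some c → st' i = some c) :
    signCountOf c st a b ≤ signCountOf c st' a b :=
  Finset.card_le_card (Finset.monotone_filter_right _ fun i _ hi =>
    ⟨hi.1, hi.2.1, h i hi.1 hi.2.1 hi.2.2⟩)

theorem signCount_le_card (st : Fin n → Option Bool) (a b : ℕ) :
    signCount st a b ≤ (Finset.univ.filter fun i => (st i).isSome).card :=
  Finset.card_le_card (Finset.monotone_filter_right _ fun _ _ h => h.2.2)

def Guarantees (n r w g : ℕ) : Prop :=
  ∀ (a : ℕ) (st : Fin n → Option Bool), a + w ≤ n →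
    (∀ i : Fin n, a ≤ i → (i : ℕ) < a + w → st i = none) →
    Forces r st fun st' => Confined a (a + w) st st' ∧ g ≤ signCount st' a (a + w)

theorem guarantees_zero (w : ℕ) : Guarantees n 0 w 0 :=
  fun _ st _ _ => ⟨Confined.refl _ _ st, Nat.zero_le _⟩

theorem guarantees_one {w : ℕ} (hw : 0 < w) : Guarantees n 1 w 1 := by
  intro a st hn hempty
  refine ⟨⟨a, by omega⟩, hempty _ le_rfl (by simp; omega), fun c R hR =>
    ⟨confined_place le_rfl (by simp; omega) c hR, Finset.card_pos.mpr ⟨⟨a, by omega⟩,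
      Finset.mem_filter.mpr ⟨Finset.mem_univ _, le_rfl, by simp; omega, by simp [place]⟩⟩⟩⟩

theorem Confined.signCountOf_true_le {a b a' b' : ℕ} {st st' : Fin n → Option Bool}
    (h : Confined a' b' st st') (hb : b ≤ a') :
    signCountOf true st a b ≤ signCountOf true st' a b :=
  signCountOf_mono fun i _ hi hst => Drops.eq_some_not (c := false) (hst ▸ h.1 i (by omega))

theorem Confined.signCountOf_false_le {a b a' b' : ℕ} {st st' : Fin n → Option Bool}
    (h : Confined a' b' st st') (ha : b' ≤ a) :
    signCountOf false st a b ≤ signCountOf false st' a b :=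
  signCountOf_mono fun i hi _ hst => Drops.eq_some_not (c := true) (hst ▸ h.2 i (by omega))

theorem Guarantees.sandwich {r₁ r₂ w₁ w₂ g₁ g₂ : ℕ} (h₁ : Guarantees n r₁ w₁ g₁)
    (h₂ : Guarantees n r₂ w₂ g₂) : Guarantees n (r₁ + r₂) (w₂ + w₁ + w₂) ((g₁ + 1) / 2 + g₂) := by
  intro a st hn hempty
  refine (h₁ (a + w₂) st (by omega) fun i hi hi' => hempty i (by omega) (by omega)).bind
    fun st' ⟨hC₁, hg₁⟩ => ?_
  have hempty' (i : Fin n) (hi : (i : ℕ) < a + w₂ ∨ a + w₂ + w₁ ≤ i) (ha : a ≤ i)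
      (hb : (i : ℕ) < a + (w₂ + w₁ + w₂)) : st' i = none :=
    hC₁.eq_none hi (hempty i ha hb)
  have hsplit := signCount_le_signCountOf_add st' (a + w₂) (a + w₂ + w₁)
  -- Continue on the side of the middle block where its majority sign cannot be removed.
  rcases le_total (signCountOf false st' (a + w₂) (a + w₂ + w₁))
    (signCountOf true st' (a + w₂) (a + w₂ + w₁)) with hmaj | hmaj
  · refine (h₂ (a + w₂ + w₁) st' (by omega) fun i hi hi' => hempty' i (.inr hi) (by omega)
      (by omega)).mono fun st'' ⟨hC₂, hg₂⟩ =>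
      ⟨hC₁.trans_of_le hC₂ (by omega) (by omega) (by omega) (by omega), ?_⟩
    calc (g₁ + 1) / 2 + g₂
        ≤ signCountOf true st'' (a + w₂) (a + w₂ + w₁) +
            signCount st'' (a + w₂ + w₁) (a + w₂ + w₁ + w₂) := by
          have := hC₂.signCountOf_true_le (a := a + w₂) le_rfl
          omega
      _ ≤ signCount st'' (a + w₂) (a + w₂ + w₁) +
            signCount st'' (a + w₂ + w₁) (a + w₂ + w₁ + w₂) :=
          Nat.add_le_add_right (signCountOf_le_signCount _ _ _ _) _
      _ ≤ signCount st'' a (a + (w₂ + w₁ + w₂)) := by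
          rw [signCount_add _ (by omega) (by omega)]
          exact signCount_mono _ (by omega) (by omega)
  · refine (h₂ a st' (by omega) fun i hi hi' => hempty' i (.inl hi') hi (by omega)).mono
      fun st'' ⟨hC₂, hg₂⟩ => ⟨hC₁.trans_of_le hC₂ (by omega) le_rfl (by omega) (by omega), ?_⟩
    calc (g₁ + 1) / 2 + g₂
        ≤ signCount st'' a (a + w₂) + signCountOf false st'' (a + w₂) (a + w₂ + w₁) := by
          have := hC₂.signCountOf_false_le (b := a + w₂ + w₁) le_rfl
          omega
      _ ≤ signCount st'' a (a + w₂) + signCount st'' (a + w₂) (a + w₂ + w₁) :=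
          Nat.add_le_add_left (signCountOf_le_signCount _ _ _ _) _
      _ ≤ signCount st'' a (a + (w₂ + w₁ + w₂)) := by
          rw [signCount_add _ (by omega) (by omega)]
          exact signCount_mono _ le_rfl (by omega)

def guarantee : ℕ → ℕ → ℕ
  | _, 0 => 1
  | 0, _ + 1 => 0
  | d + 1, k + 1 => (guarantee d k + 1) / 2 + guarantee d (k + 1)

theorem choose_le_guarantee_mul : ∀ d k, d.choose k ≤ guarantee d k * 2 ^ k
  | _, 0 => by simp [guarantee]
  | 0, _ + 1 => by simp
  | d + 1, k + 1 => by
    have h₁ := choose_le_guarantee_mul d k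
    have h₂ := choose_le_guarantee_mul d (k + 1)
    have : guarantee d k * 2 ^ k ≤ (guarantee d k + 1) / 2 * 2 ^ (k + 1) :=
      calc guarantee d k * 2 ^ k ≤ (guarantee d k + 1) / 2 * 2 * 2 ^ k :=
            Nat.mul_le_mul_right _ (by omega)
        _ = (guarantee d k + 1) / 2 * 2 ^ (k + 1) := by ring
    rw [Nat.choose_succ_succ', guarantee, add_mul]
    omega

theorem guarantees_pascal : ∀ d k, Guarantees n (d.choose k) (blockWidth d k) (guarantee d k)
  | d, 0 => by
    simpa [blockWidth, guarantee] using guarantees_one (n := n) (Nat.two_pow_pos d)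
  | 0, k + 1 => by simpa [blockWidth, guarantee] using guarantees_zero (n := n) 0
  | d + 1, k + 1 => by
    rw [Nat.choose_succ_succ', blockWidth_succ_succ]
    exact (guarantees_pascal d k).sandwich (guarantees_pascal d (k + 1))

theorem guarantee_le_opt (d k : ℕ) : guarantee d k ≤ opt (blockWidth d k) (d.choose k) :=
  le_sprVal_of_forces (guarantees_pascal d k 0 (fun _ => none) (by omega) fun _ _ _ => rfl)
    fun st' h => h.2.trans (signCount_le_card _ _ _)

theorem choose_mul_inv_two_pow_le_opt (d k : ℕ) :
    (d.choose k : ℝ) * (2 : ℝ)⁻¹ ^ k ≤ opt (blockWidth d k) (d.choose k) := by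
  rw [inv_pow, ← div_eq_mul_inv, div_le_iff₀ (by positivity)]
  exact_mod_cast (choose_le_guarantee_mul d k).trans (Nat.mul_le_mul_right _ (guarantee_le_opt d k))

end SignPreservation

theorem stmt_13_general (d k : ℕ) :
    (∃ P : PMF (Fin (Nat.choose d k) → Fin (Nat.choose d k * 2 ^ (d - k))),
      (∀ σ ∈ P.support, Function.Injective σ) ∧
      (∀ (i : Fin (Nat.choose d k))
          (k' : Fin (Nat.choose d k) → Fin (Nat.choose d k * 2 ^ (d - k))),
        (2 : ℝ≥0∞)⁻¹ ^ k * P.toMeasure {σ | ∀ j ≤ i, σ j = k' j}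
            ≤ P.toMeasure {σ | (∀ j ≤ i, σ j = k' j) ∧ ∀ j, i < j → σ i < σ j} ∧
        (2 : ℝ≥0∞)⁻¹ ^ k * P.toMeasure {σ | ∀ j ≤ i, σ j = k' j}
            ≤ P.toMeasure {σ | (∀ j ≤ i, σ j = k' j) ∧ ∀ j, i < j → σ j < σ i})) ∧
    (Nat.choose d k : ℝ) * (2 : ℝ)⁻¹ ^ k ≤ (opt (Nat.choose d k * 2 ^ (d - k)) (Nat.choose d k) : ℝ) := by
  refine ⟨?_, SignPreservation.choose_mul_inv_two_pow_le_opt d k⟩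
  have h := (ObliviousStrategy.pascal d k).exists_pmf (ObliviousStrategy.isPreserving_pascal d k)
    (ObliviousStrategy.pascal_rounds d k) (ObliviousStrategy.pascal_width d k)
  rwa [Nat.cast_pow, Nat.cast_ofNat, ENNReal.inv_pow] at h

/-- Existence of an oblivious no-reuse strategy for Player-P in the sign-preservation game
with `n = C(d,k)·2^(d-k)` cells and `s = C(d,k)` rounds whose worst-case preservation
probability is at least `2^(-k)`; in particular `opt n s ≥ s·2^(-k)`. The strategy is a
distribution over sequences of cells with almost surely distinct coordinates, such that
conditioned on any positive-probability history through round `i`, with probability at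
least `2^(-k)` all future cells lie strictly above the `i`-th cell, and likewise with
probability at least `2^(-k)` they all lie strictly below it. -/
theorem stmt_13 (d k : ℕ) (hdk : k ≤ d) :
    (∃ P : PMF (Fin (Nat.choose d k) → Fin (Nat.choose d k * 2 ^ (d - k))),
      (∀ σ ∈ P.support, Function.Injective σ) ∧
      (∀ (i : Fin (Nat.choose d k))
          (k' : Fin (Nat.choose d k) → Fin (Nat.choose d k * 2 ^ (d - k))),
        (2 : ℝ≥0∞)⁻¹ ^ k * P.toMeasure {σ | ∀ j ≤ i, σ j = k' j}
            ≤ P.toMeasure {σ | (∀ j ≤ i, σ j = k' j) ∧ ∀ j, i < j → σ i < σ j} ∧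
        (2 : ℝ≥0∞)⁻¹ ^ k * P.toMeasure {σ | ∀ j ≤ i, σ j = k' j}
            ≤ P.toMeasure {σ | (∀ j ≤ i, σ j = k' j) ∧ ∀ j, i < j → σ j < σ i})) ∧
    (Nat.choose d k : ℝ) * (2 : ℝ)⁻¹ ^ k ≤ (opt (Nat.choose d k * 2 ^ (d - k)) (Nat.choose d k) : ℝ) :=
  stmt_13_general d k
end

section
/- There exists λ ∈ (0,1) such that 1 - (h(λ)+1)/(3h(λ) + 2 - 2λ) > 0.543895, where h(p) = -p·log₂(p) - (1-p)·log₂(1-p) is the binary entropy function. -/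
/-!
In bits the expression is `g (binEntropy λ / log 2)` with `g h = 1 - (h + 1) / (3h + 2 - 2λ)`,
which is increasing in `h ≥ 0`. At `λ = 0.15229` the entropy exceeds `0.61554` bits, and
`g 0.61554 > 0.543895` is a rational inequality. The entropy bound reduces to two upper
bounds on logarithms of numbers close to `1`, obtained from partial sums of the exponential series.
-/

open Real

lemma neg_mul_logb_sub_mul_logb_eq_binEntropy_div_log (p : ℝ) :
    -p * logb 2 p - (1 - p) * logb 2 (1 - p) = binEntropy p / log 2 := by
  simp only [binEntropy, logb, log_inv]
  ring

lemma strictMonoOn_one_sub_div {lam : ℝ} (hlam : lam ∈ Set.Ioo (0 : ℝ) 1) :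
    StrictMonoOn (fun h : ℝ => 1 - (h + 1) / (3 * h + 2 - 2 * lam)) (Set.Ici 0) := by
  intro h₀ (h₀_nonneg : 0 ≤ h₀) h (h_nonneg : 0 ≤ h) hlt
  obtain ⟨hlam₀, hlam₁⟩ := hlam
  have hden₀ : 0 < 3 * h₀ + 2 - 2 * lam := by linarith
  have hden : 0 < 3 * h + 2 - 2 * lam := by linarith
  simp only [sub_lt_sub_iff_left]
  rw [div_lt_div_iff₀ hden hden₀]
  nlinarith

lemma log_15229_div_12500_lt : log (15229 / 12500) < 0.1974729 := by
  rw [log_lt_iff_lt_exp (by norm_num)]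
  refine lt_of_lt_of_le ?_ (sum_le_exp_of_nonneg (by norm_num) 8)
  simp only [Finset.sum_range_succ, Finset.sum_range_zero, Nat.factorial]
  norm_num

lemma log_84771_div_100000_lt : log (84771 / 100000) < -0.1652166 := by
  rw [log_lt_iff_lt_exp (by norm_num), exp_neg, lt_inv_comm₀ (by norm_num) (exp_pos _)]
  refine lt_of_le_of_lt (exp_bound' (by norm_num) (by norm_num) (n := 8) (by norm_num)) ?_
  simp only [Finset.sum_range_succ, Finset.sum_range_zero, Nat.factorial]
  norm_num

lemma mul_log_two_lt_binEntropy : 0.61554 * log 2 < binEntropy 0.15229 := by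
  -- `0.15229 = (15229 / 12500) / 2 ^ 3` moves the logarithm close to `1`.
  have hlog : log 0.15229 = log (15229 / 12500) - 3 * log 2 := by
    rw [show (0.15229 : ℝ) = 15229 / 12500 / 2 ^ 3 by norm_num,
      log_div (by norm_num) (by norm_num), log_pow]
    push_cast
    ring
  have hlog_one_sub : log (1 - 0.15229) = log (84771 / 100000) := by norm_num
  rw [binEntropy, log_inv, log_inv, hlog, hlog_one_sub]
  linarith [log_15229_div_12500_lt, log_84771_div_100000_lt, log_two_lt_d9]

theorem stmt_18 :
    ∃ lam ∈ Set.Ioo (0:ℝ) 1,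
      0.543895 <
        1 - ((-lam * Real.logb 2 lam - (1 - lam) * Real.logb 2 (1 - lam)) + 1) /
          (3 * (-lam * Real.logb 2 lam - (1 - lam) * Real.logb 2 (1 - lam)) + 2 - 2 * lam) := by
  have hlam : (0.15229 : ℝ) ∈ Set.Ioo 0 1 := by norm_num
  refine ⟨0.15229, hlam, ?_⟩
  rw [neg_mul_logb_sub_mul_logb_eq_binEntropy_div_log]
  have hentropy : 0.61554 < binEntropy 0.15229 / log 2 :=
    (lt_div_iff₀ (log_pos one_lt_two)).2 mul_log_two_lt_binEntropy
  have hbound_nonneg : (0 : ℝ) ≤ 0.61554 := by norm_num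
  calc (0.543895 : ℝ) < 1 - (0.61554 + 1) / (3 * 0.61554 + 2 - 2 * 0.15229) := by norm_num
    _ < _ := strictMonoOn_one_sub_div hlam hbound_nonneg (hbound_nonneg.trans hentropy.le) hentropy
end

section
/- Let β ∈ (0,1). The function g(p) = p^β + (1-p)^β/(2^β - 1) is decreasing on [1/2, 1]. -/
/-! On `(1/2, 1)` the derivative of `g` is `β (p^(β-1) - (1-p)^(β-1) / c)` with `c = 2^β - 1`.
Since `β - 1 < 0` and `p > 1 - p`, we get `p^(β-1) < (1-p)^(β-1)`, and dividing by `c ∈ (0, 1]`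
only enlarges the second term, so the derivative is negative. -/

open Real

theorem hasDerivAt_rpow_add_one_sub_rpow_div {β c x : ℝ} (hx : x ≠ 0) (hx' : 1 - x ≠ 0) :
    HasDerivAt (fun p : ℝ => p ^ β + (1 - p) ^ β / c)
      (β * x ^ (β - 1) - β * (1 - x) ^ (β - 1) / c) x := by
  have hleft := hasDerivAt_rpow_const (p := β) (Or.inl hx)
  have hright := (hasDerivAt_rpow_const (p := β) (Or.inl hx')).comp x
    ((hasDerivAt_id x).const_sub 1)
  exact (hleft.add (hright.div_const c)).congr_deriv (by ring)

theorem continuous_rpow_add_one_sub_rpow_div {β : ℝ} (hβ : 0 ≤ β) (c : ℝ) :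
    Continuous (fun p : ℝ => p ^ β + (1 - p) ^ β / c) :=
  (continuous_rpow_const hβ).add
    (((continuous_rpow_const hβ).comp (continuous_const.sub continuous_id)).div_const c)

theorem strictAntiOn_rpow_add_one_sub_rpow_div {β c : ℝ} (hβ0 : 0 < β) (hβ1 : β < 1)
    (hc0 : 0 < c) (hc1 : c ≤ 1) :
    StrictAntiOn (fun p : ℝ => p ^ β + (1 - p) ^ β / c) (Set.Icc (1 / 2) 1) := by
  refine strictAntiOn_of_deriv_neg (convex_Icc _ _)
    (continuous_rpow_add_one_sub_rpow_div hβ0.le c).continuousOn ?_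
  rw [interior_Icc]
  rintro x ⟨hx_gt, hx_lt⟩
  have hx' : 0 < 1 - x := by linarith
  rw [(hasDerivAt_rpow_add_one_sub_rpow_div (by linarith) hx'.ne').deriv, sub_neg]
  calc β * x ^ (β - 1) < β * (1 - x) ^ (β - 1) :=
        mul_lt_mul_of_pos_left (rpow_lt_rpow_of_neg hx' (by linarith) (by linarith)) hβ0
    _ ≤ β * (1 - x) ^ (β - 1) / c := le_div_self (by positivity) hc0 hc1

theorem stmt_19 (β : ℝ) (hβ : β ∈ Set.Ioo (0:ℝ) 1) :
    StrictAntiOn (fun p : ℝ => p ^ β + (1 - p) ^ β / (2 ^ β - 1))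
      (Set.Icc (1/2 : ℝ) 1) := by
  obtain ⟨hβ0, hβ1⟩ := hβ
  have htwo_rpow_le : (2 : ℝ) ^ β ≤ 2 := by
    simpa using rpow_le_rpow_of_exponent_le one_le_two hβ1.le
  exact strictAntiOn_rpow_add_one_sub_rpow_div hβ0 hβ1
    (sub_pos.2 (one_lt_rpow one_lt_two hβ0)) (by linarith)
end
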